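/- Let S = {(x₁,x₂) ∈ ℝ² : x₁²+x₂² = 1} be the unit circle and let P(x₁,x₂,x₃) = (1−x₁)x₃⁴ + 4x₂x₃³ + (2+6x₁)x₃² − 4x₂x₃ + (1−x₁). Then for every t ∈ ℝ, the projective roots of P above (cos t, sin t) ∈ S are exactly the two points (sin(t/4) : cos(t/4)) and (−cos(t/4) : sin(t/4)) of ℝP¹, each of multiplicity two with respect to degree 4; consequently Z_{ℝP¹}(P,S) is connected (being the image of ℝ under t ↦ (cos t, sin t, (sin(t/4):cos(t/4)))), and P is not projectively delineable over S. -/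

import Mathlib

/-! Above `(cos t, sin t)` the binary form `H⁴(P)` factors as
`8 (c X₀ - s X₁)² (s X₀ + c X₁)²` with `c = cos (t/4)`, `s = sin (t/4)`, so its projective
roots are the double roots `(s : c)` and `(-c : s)`. Replacing `t` by `t - 2π` returns to the same
point of the circle but turns `(s : c)` into `(-c : s)`, so the two roots lie on one connected
curve. A continuous root function, pulled back to `ℝ`, follows one branch on a clopen set (`ℝP¹` is
Hausdorff), hence everywhere, and so takes two values at the same point of the circle. -/

noncomputable section

open Polynomial Finset

/-- The real projective line `ℝP¹`: the quotient of `ℝ² ∖ {0}` by proportionality. -/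
abbrev RP1 : Type := Projectivization ℝ (Fin 2 → ℝ)

/-- The quotient topology on the real projective line. -/
instance : TopologicalSpace RP1 :=
  inferInstanceAs (TopologicalSpace (Quotient (projectivizationSetoid ℝ (Fin 2 → ℝ))))

/-- Homogenization of a univariate real polynomial with respect to the degree `d`,
as a binary form (an element of `ℝ[x,y]`, homogeneous of degree `d` when `P.natDegree ≤ d`):
`H^d(P)(x,y) = ∑_{k=0}^d c_k x^k y^(d-k)`. -/
def homog (d : ℕ) (P : Polynomial ℝ) : MvPolynomial (Fin 2) ℝ :=
  ∑ k ∈ Finset.range (d + 1),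
    MvPolynomial.C (P.coeff k) * MvPolynomial.X 0 ^ k * MvPolynomial.X 1 ^ (d - k)

/-- The pull-back `ι_M^{*}` of a binary form `g` along the parametrized line
`ι_M : x ↦ M (x,1)ᵀ`, i.e. the univariate polynomial `g(m₁₁ x + m₁₂, m₂₁ x + m₂₂)`.
For `M = 1` this is the standard pull-back `ι^{*d} g = g(x, 1)`. -/
def pullM (M : Matrix (Fin 2) (Fin 2) ℝ) (g : MvPolynomial (Fin 2) ℝ) : Polynomial ℝ :=
  MvPolynomial.eval₂ Polynomial.C
    ![Polynomial.C (M 0 0) * Polynomial.X + Polynomial.C (M 0 1),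
      Polynomial.C (M 1 0) * Polynomial.X + Polynomial.C (M 1 1)] g

/-- Right composition `R_M g = g ∘ M` of a binary form with a linear map of `ℝ²`. -/
def compM (M : Matrix (Fin 2) (Fin 2) ℝ) (g : MvPolynomial (Fin 2) ℝ) : MvPolynomial (Fin 2) ℝ :=
  MvPolynomial.eval₂ MvPolynomial.C
    (fun i => ∑ j, MvPolynomial.C (M i j) * MvPolynomial.X j) g

/-- The operator `A^{*d} P = ι_A^{*d} (H^d P)`, i.e.
`A^{*d}P(x) = ∑_{k=0}^d c_k (a₁₁x+a₁₂)^k (a₂₁x+a₂₂)^{d-k}` for `P = ∑ c_k x^k`. -/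
def AstarU (d : ℕ) (M : Matrix (Fin 2) (Fin 2) ℝ) (P : Polynomial ℝ) : Polynomial ℝ :=
  pullM M (homog d P)

/-- The Sylvester matrix of `P` and `Q` with respect to the fixed degrees `p` and `q`
(padding with zero coefficients as if `deg P = p` and `deg Q = q`). -/
def sylvester {R : Type*} [CommRing R] (p q : ℕ) (P Q : Polynomial R) :
    Matrix (Fin (p + q)) (Fin (p + q)) R := fun i j =>
  if (i : ℕ) < q then
    (if (i : ℕ) ≤ (j : ℕ) ∧ (j : ℕ) ≤ (i : ℕ) + p then P.coeff (p + (i : ℕ) - (j : ℕ)) else 0)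
  else
    (if (i : ℕ) - q ≤ (j : ℕ) ∧ (j : ℕ) ≤ (i : ℕ) then Q.coeff (q + ((i : ℕ) - q) - (j : ℕ)) else 0)

/-- The resultant `Res^{p,q}(P,Q)` with respect to the fixed degrees `p` and `q`:
the determinant of the corresponding Sylvester matrix. -/
def resFixed {R : Type*} [CommRing R] (p q : ℕ) (P Q : Polynomial R) : R :=
  (sylvester p q P Q).det

/-- The discriminant `Disc^p(P)` of `P` with respect to the fixed degree `p`: the resultant
(with respect to degrees `(p-1, p-1)`) of the pull-backs of the two partial derivatives
`F_x`, `F_y` of the binary form `F = H^p(P)`; these pull-backs are `P'` and `p·P − x·P'`. -/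
def discFixed {R : Type*} [CommRing R] (p : ℕ) (P : Polynomial R) : R :=
  (-1) ^ (p * (p - 1) / 2) *
    resFixed (p - 1) (p - 1) (Polynomial.derivative P)
      (Polynomial.C (p : R) * P - Polynomial.X * Polynomial.derivative P)

/-- Evaluation `E_x` of a polynomial in `x₁,…,x_m;x_n` at `x ∈ ℝ^m` in its first `m`
variables, giving a univariate real polynomial in `x_n`. -/
def evalP {m : ℕ} (P : Polynomial (MvPolynomial (Fin m) ℝ)) (x : Fin m → ℝ) : Polynomial ℝ :=
  P.map (MvPolynomial.eval x : MvPolynomial (Fin m) ℝ →+* ℝ)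

/-- The operator `A^{*d}` acting on the last variable of a polynomial in `x₁,…,x_m;x_n`:
`A^{*d}P(x,x_n) = ∑_{k=0}^d c_k(x) (a₁₁x_n+a₁₂)^k (a₂₁x_n+a₂₂)^{d-k}`. -/
def AstarPoly {m : ℕ} (d : ℕ) (M : Matrix (Fin 2) (Fin 2) ℝ)
    (P : Polynomial (MvPolynomial (Fin m) ℝ)) : Polynomial (MvPolynomial (Fin m) ℝ) :=
  ∑ k ∈ Finset.range (d + 1),
    Polynomial.C (P.coeff k) *
      (Polynomial.C (MvPolynomial.C (M 0 0)) * Polynomial.X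
        + Polynomial.C (MvPolynomial.C (M 0 1))) ^ k *
      (Polynomial.C (MvPolynomial.C (M 1 0)) * Polynomial.X
        + Polynomial.C (MvPolynomial.C (M 1 1))) ^ (d - k)

/-- The order of a (polynomial) function at a point: the smallest `k` such that some
partial derivative of total order `k` does not vanish at the point, i.e. the smallest `k`
with `iteratedFDeriv ℝ k f v ≠ 0`; it is `⊤` if all derivatives vanish. -/
def ordAt {E : Type*} [NormedAddCommGroup E] [NormedSpace ℝ E] (f : E → ℝ) (v : E) : ℕ∞ :=
  sInf {k : ℕ∞ | ∃ n : ℕ, k = n ∧ iteratedFDeriv ℝ n f v ≠ 0}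

/-- A function is order-invariant on a set if it has the same order at every point of the set. -/
def OrderInvariantOn {E : Type*} [NormedAddCommGroup E] [NormedSpace ℝ E]
    (f : E → ℝ) (S : Set E) : Prop :=
  ∀ x ∈ S, ∀ y ∈ S, ordAt f x = ordAt f y

/-- `(v 0 : v 1)` is a projective root of the binary form `g` of multiplicity (exactly) `mult`:
in the factorization of `g`, the linear form vanishing on the line through `v` occurs with
exponent `mult`. -/
def HasProjRootOfMult (g : MvPolynomial (Fin 2) ℝ) (v : Fin 2 → ℝ) (mult : ℕ) : Prop :=
  ∃ h : MvPolynomial (Fin 2) ℝ,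
    g = (MvPolynomial.C (v 1) * MvPolynomial.X 0 - MvPolynomial.C (v 0) * MvPolynomial.X 1) ^ mult * h
      ∧ MvPolynomial.eval v h ≠ 0

/-- The projective zero set `Z_{ℝP¹}(P,S)` of `P` over `S`, with respect to the degree `d`
in the last variable: the set of `(x, (x_n : y))` with `x ∈ S` and `H^d(P)(x,(x_n,y)) = 0`. -/
def ZProj {m : ℕ} (d : ℕ) (P : Polynomial (MvPolynomial (Fin m) ℝ)) (S : Set (Fin m → ℝ)) :
    Set ((Fin m → ℝ) × RP1) :=
  {p | p.1 ∈ S ∧ ∃ (v : Fin 2 → ℝ) (hv : v ≠ 0),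
    Projectivization.mk ℝ v hv = p.2 ∧ MvPolynomial.eval v (homog d (evalP P p.1)) = 0}

/-- `θ` is a (finite) system of real root functions for `P` on `S`: continuous functions with
pairwise disjoint graphs whose union is `Z_ℝ(P,S)`, each of constant positive multiplicity. -/
def IsRealRootFunctions {m : ℕ} (P : Polynomial (MvPolynomial (Fin m) ℝ)) (S : Set (Fin m → ℝ))
    {k : ℕ} (θ : Fin k → (Fin m → ℝ) → ℝ) : Prop :=
  (∀ l, ContinuousOn (θ l) S) ∧
  (∀ x ∈ S, ∀ l l' : Fin k, l ≠ l' → θ l x ≠ θ l' x) ∧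
  (∀ x ∈ S, ∀ t : ℝ, (evalP P x).eval t = 0 ↔ ∃ l, θ l x = t) ∧
  (∀ l : Fin k, ∃ mult : ℕ, 0 < mult ∧ ∀ x ∈ S, (evalP P x).rootMultiplicity (θ l x) = mult)

/-- `P` is delineable on `S`. -/
def Delineable {m : ℕ} (P : Polynomial (MvPolynomial (Fin m) ℝ)) (S : Set (Fin m → ℝ)) : Prop :=
  ∃ (k : ℕ) (θ : Fin k → (Fin m → ℝ) → ℝ), IsRealRootFunctions P S θ

/-- `θ` is a (finite) system of projective root functions for `P` on `S` with respect to the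
degree `d` in the last variable: continuous functions into `ℝP¹` with pairwise disjoint graphs
whose union is `Z_{ℝP¹}(P,S)`, each of constant positive multiplicity. -/
def IsProjRootFunctions {m : ℕ} (d : ℕ) (P : Polynomial (MvPolynomial (Fin m) ℝ))
    (S : Set (Fin m → ℝ)) {k : ℕ} (θ : Fin k → (Fin m → ℝ) → RP1) : Prop :=
  (∀ l, ContinuousOn (θ l) S) ∧
  (∀ x ∈ S, ∀ l l' : Fin k, l ≠ l' → θ l x ≠ θ l' x) ∧
  (∀ x ∈ S, ∀ (v : Fin 2 → ℝ) (hv : v ≠ 0),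
    (MvPolynomial.eval v (homog d (evalP P x)) = 0 ↔ ∃ l, θ l x = Projectivization.mk ℝ v hv)) ∧
  (∀ l : Fin k, ∃ mult : ℕ, 0 < mult ∧ ∀ x ∈ S, ∀ (v : Fin 2 → ℝ) (hv : v ≠ 0),
    θ l x = Projectivization.mk ℝ v hv → HasProjRootOfMult (homog d (evalP P x)) v mult)

/-- `P` is projectively delineable on `S` (with respect to the degree `d` in the last variable). -/
def ProjDelineable {m : ℕ} (d : ℕ) (P : Polynomial (MvPolynomial (Fin m) ℝ))
    (S : Set (Fin m → ℝ)) : Prop :=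
  ∃ (k : ℕ) (θ : Fin k → (Fin m → ℝ) → RP1), IsProjRootFunctions d P S θ

/-- `S` is an analytic submanifold of `ℝ^m`: around each of its points, in suitable
real-analytic coordinates, `S` is an open piece of a linear subspace. -/
def IsAnalyticSubmanifold {m : ℕ} (S : Set (Fin m → ℝ)) : Prop :=
  ∀ s ∈ S, ∃ (U V : Set (Fin m → ℝ)) (φ ψ : (Fin m → ℝ) → (Fin m → ℝ))
      (L : Submodule ℝ (Fin m → ℝ)),
    IsOpen U ∧ IsOpen V ∧ s ∈ U ∧
    AnalyticOnNhd ℝ φ U ∧ AnalyticOnNhd ℝ ψ V ∧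
    Set.MapsTo φ U V ∧ Set.MapsTo ψ V U ∧
    Set.EqOn (ψ ∘ φ) id U ∧ Set.EqOn (φ ∘ ψ) id V ∧
    φ '' (U ∩ S) = V ∩ (L : Set (Fin m → ℝ))

end

/-- The unit circle in `ℝ²`. -/
def circleS : Set (Fin 2 → ℝ) := {x : Fin 2 → ℝ | x 0 ^ 2 + x 1 ^ 2 = 1}

/-- The polynomial `P(x₁,x₂,x₃) = (1−x₁)x₃⁴ + 4x₂x₃³ + (2+6x₁)x₃² − 4x₂x₃ + (1−x₁)`. -/
noncomputable def Pex : Polynomial (MvPolynomial (Fin 2) ℝ) :=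
  Polynomial.C (1 - MvPolynomial.X 0) * Polynomial.X ^ 4 +
  Polynomial.C (4 * MvPolynomial.X 1) * Polynomial.X ^ 3 +
  Polynomial.C (2 + 6 * MvPolynomial.X 0) * Polynomial.X ^ 2 -
  Polynomial.C (4 * MvPolynomial.X 1) * Polynomial.X +
  Polynomial.C (1 - MvPolynomial.X 0)

lemma sincos_ne (u : ℝ) : (![Real.sin u, Real.cos u] : Fin 2 → ℝ) ≠ 0 := by
  intro h
  have h0 : Real.sin u = 0 := by simpa using congrFun h 0
  have h1 : Real.cos u = 0 := by simpa using congrFun h 1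
  have h2 := Real.sin_sq_add_cos_sq u
  rw [h0, h1] at h2
  norm_num at h2

lemma negcossin_ne (u : ℝ) : (![-Real.cos u, Real.sin u] : Fin 2 → ℝ) ≠ 0 := by
  intro h
  have h0 : -Real.cos u = 0 := by simpa using congrFun h 0
  have h1 : Real.sin u = 0 := by simpa using congrFun h 1
  have h2 := Real.sin_sq_add_cos_sq u
  rw [h1, neg_eq_zero.mp h0] at h2
  norm_num at h2

open MvPolynomial

namespace Projectivization

theorem mk_eq_mk_iff_mul_eq_mul {K : Type*} [Field K] {v w : Fin 2 → K} (hv : v ≠ 0)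
    (hw : w ≠ 0) : mk K v hv = mk K w hw ↔ v 0 * w 1 = v 1 * w 0 := by
  rw [mk_eq_mk_iff']
  simp only [funext_iff, Fin.forall_fin_two, Pi.smul_apply, smul_eq_mul]
  constructor
  · rintro ⟨a, h0, h1⟩
    rw [← h0, ← h1]
    ring
  · intro h
    have hw' : w 0 ≠ 0 ∨ w 1 ≠ 0 := by
      contrapose! hw
      exact funext <| Fin.forall_fin_two.2 hw
    rcases hw' with hw0 | hw1
    · exact ⟨v 0 / w 0, by field_simp, by field_simp; linear_combination h⟩
    · exact ⟨v 1 / w 1, by field_simp; linear_combination -h, by field_simp⟩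

end Projectivization

noncomputable def linForm {R : Type*} [CommRing R] (w : Fin 2 → R) : MvPolynomial (Fin 2) R :=
  C (w 1) * X 0 - C (w 0) * X 1

theorem eval_linForm {R : Type*} [CommRing R] (v w : Fin 2 → R) :
    eval v (linForm w) = v 0 * w 1 - v 1 * w 0 := by
  simp only [linForm, map_sub, map_mul, eval_C, eval_X]
  ring

theorem eval_linForm_eq_zero_iff {K : Type*} [Field K] {v w : Fin 2 → K} (hv : v ≠ 0)
    (hw : w ≠ 0) :
    eval v (linForm w) = 0 ↔ Projectivization.mk K v hv = Projectivization.mk K w hw := by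
  rw [eval_linForm, sub_eq_zero, Projectivization.mk_eq_mk_iff_mul_eq_mul]

theorem hasProjRootOfMult_C_mul_linForm_pow_mul_linForm_pow {v w : Fin 2 → ℝ} (hv : v ≠ 0)
    (hw : w ≠ 0) (hvw : Projectivization.mk ℝ v hv ≠ Projectivization.mk ℝ w hw) {c : ℝ}
    (hc : c ≠ 0) (m n : ℕ) :
    HasProjRootOfMult (C c * linForm v ^ m * linForm w ^ n) v m := by
  refine ⟨C c * linForm w ^ n, by unfold linForm; ring, ?_⟩
  rw [map_mul, map_pow, eval_C]
  exact mul_ne_zero hc (pow_ne_zero _ (mt (eval_linForm_eq_zero_iff hv hw).1 hvw))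

/-- The double-angle map `(cos φ, sin φ) ↦ (cos 2φ, sin 2φ)`, extended homogeneously. -/
noncomputable def doubleAngle (v : Fin 2 → ℝ) : ℝ × ℝ :=
  ((v 0 ^ 2 - v 1 ^ 2) / (v 0 ^ 2 + v 1 ^ 2), 2 * v 0 * v 1 / (v 0 ^ 2 + v 1 ^ 2))

theorem doubleAngle_smul {a : ℝ} (ha : a ≠ 0) (v : Fin 2 → ℝ) :
    doubleAngle (a • v) = doubleAngle v := by
  simp only [doubleAngle, Pi.smul_apply, smul_eq_mul, Prod.mk.injEq]
  constructor <;> (conv_rhs => rw [← mul_div_mul_left _ _ (pow_ne_zero 2 ha)]) <;> ring_nf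

noncomputable def doubleAngleRP1 : RP1 → ℝ × ℝ :=
  Projectivization.lift (fun v => doubleAngle v.1) fun v w a h => by
    have ha : a ≠ 0 := by
      rintro rfl
      exact v.2 (by simpa using h)
    rw [h, doubleAngle_smul ha]

theorem sq_add_sq_ne_zero_of_ne_zero {v : Fin 2 → ℝ} (hv : v ≠ 0) : v 0 ^ 2 + v 1 ^ 2 ≠ 0 := by
  contrapose! hv
  obtain ⟨h0, h1⟩ := (add_eq_zero_iff_of_nonneg (sq_nonneg _) (sq_nonneg _)).1 hv
  exact funext <| Fin.forall_fin_two.2 ⟨pow_eq_zero_iff two_ne_zero |>.1 h0,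
    pow_eq_zero_iff two_ne_zero |>.1 h1⟩

theorem doubleAngleRP1_injective : Function.Injective doubleAngleRP1 := by
  intro p q h
  induction p using Projectivization.ind with | h v hv =>
  induction q using Projectivization.ind with | h w hw =>
  have hv' := sq_add_sq_ne_zero_of_ne_zero hv
  have hw' := sq_add_sq_ne_zero_of_ne_zero hw
  simp only [doubleAngleRP1, Projectivization.lift_mk, doubleAngle, Prod.mk.injEq,
    div_eq_div_iff hv' hw'] at h
  obtain ⟨h1, h2⟩ := h
  rw [Projectivization.mk_eq_mk_iff_mul_eq_mul]
  have h : (v 0 ^ 2 + v 1 ^ 2) * (2 * (v 0 * w 1 - v 1 * w 0) ^ 2) = 0 := by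
    linear_combination (v 0 ^ 2 - v 1 ^ 2) * h1 + 2 * v 0 * v 1 * h2
  simpa [hv', sub_eq_zero] using h

theorem doubleAngleRP1_continuous : Continuous doubleAngleRP1 := by
  refine continuous_quot_lift _ ?_
  have h0 : Continuous fun v : {v : Fin 2 → ℝ // v ≠ 0} => v.1 0 :=
    (continuous_apply _).comp continuous_subtype_val
  have h1 : Continuous fun v : {v : Fin 2 → ℝ // v ≠ 0} => v.1 1 :=
    (continuous_apply _).comp continuous_subtype_val
  have hden := fun v : {v : Fin 2 → ℝ // v ≠ 0} => sq_add_sq_ne_zero_of_ne_zero v.2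
  exact (((h0.pow 2).sub (h1.pow 2)).div ((h0.pow 2).add (h1.pow 2)) hden).prodMk
    (((continuous_const.mul h0).mul h1).div ((h0.pow 2).add (h1.pow 2)) hden)

instance : T2Space RP1 :=
  .of_injective_continuous doubleAngleRP1_injective doubleAngleRP1_continuous

theorem continuous_mk_RP1 {α : Type*} [TopologicalSpace α] {f : α → Fin 2 → ℝ}
    (hf : Continuous f) (h : ∀ t, f t ≠ 0) :
    Continuous fun t => Projectivization.mk ℝ (f t) (h t) :=
  continuous_quotient_mk'.comp (hf.subtype_mk h)

theorem Real.cos_four_mul' (u : ℝ) :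
    Real.cos (4 * u) = Real.cos u ^ 4 - 6 * Real.cos u ^ 2 * Real.sin u ^ 2 + Real.sin u ^ 4 := by
  rw [show 4 * u = 2 * (2 * u) by ring, Real.cos_two_mul', Real.cos_two_mul', Real.sin_two_mul]
  ring

theorem Real.sin_four_mul (u : ℝ) :
    Real.sin (4 * u) = 4 * Real.sin u * Real.cos u * (Real.cos u ^ 2 - Real.sin u ^ 2) := by
  rw [show 4 * u = 2 * (2 * u) by ring, Real.sin_two_mul, Real.sin_two_mul, Real.cos_two_mul']
  ring

theorem eval_homog (d : ℕ) (P : Polynomial ℝ) (v : Fin 2 → ℝ) :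
    eval v (homog d P) = ∑ k ∈ Finset.range (d + 1), P.coeff k * v 0 ^ k * v 1 ^ (d - k) := by
  simp [homog]

theorem evalP_Pex (x : Fin 2 → ℝ) :
    evalP Pex x =
      Polynomial.C (1 - x 0) * Polynomial.X ^ 4 + Polynomial.C (4 * x 1) * Polynomial.X ^ 3
      + Polynomial.C (2 + 6 * x 0) * Polynomial.X ^ 2 - Polynomial.C (4 * x 1) * Polynomial.X
      + Polynomial.C (1 - x 0) := by
  simp [evalP, Pex]

theorem eval_homog_evalP_Pex (x v : Fin 2 → ℝ) :
    eval v (homog 4 (evalP Pex x)) =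
      (1 - x 0) * v 0 ^ 4 + 4 * x 1 * v 0 ^ 3 * v 1 + (2 + 6 * x 0) * v 0 ^ 2 * v 1 ^ 2
        - 4 * x 1 * v 0 * v 1 ^ 3 + (1 - x 0) * v 1 ^ 4 := by
  simp only [eval_homog, evalP_Pex, Finset.sum_range_succ, Finset.sum_range_zero,
    Polynomial.coeff_add, Polynomial.coeff_sub, Polynomial.coeff_C_mul, Polynomial.coeff_X_pow,
    Polynomial.coeff_X, Polynomial.coeff_C]
  norm_num
  ring

noncomputable def circlePoint (t : ℝ) : Fin 2 → ℝ := ![Real.cos t, Real.sin t]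

noncomputable def rootCurve₁ (t : ℝ) : RP1 :=
  Projectivization.mk ℝ ![Real.sin (t / 4), Real.cos (t / 4)] (sincos_ne (t / 4))

noncomputable def rootCurve₂ (t : ℝ) : RP1 :=
  Projectivization.mk ℝ ![-Real.cos (t / 4), Real.sin (t / 4)] (negcossin_ne (t / 4))

theorem homog_evalP_Pex_circlePoint (t : ℝ) :
    homog 4 (evalP Pex (circlePoint t)) =
      C 8 * linForm ![Real.sin (t / 4), Real.cos (t / 4)] ^ 2
        * linForm ![-Real.cos (t / 4), Real.sin (t / 4)] ^ 2 := by
  obtain ⟨u, rfl⟩ : ∃ u, t = 4 * u := ⟨t / 4, by ring⟩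
  refine MvPolynomial.funext fun v => ?_
  simp only [eval_homog_evalP_Pex, circlePoint, map_mul, map_pow, eval_C, eval_linForm,
    Matrix.cons_val_zero, Matrix.cons_val_one, mul_div_cancel_left₀ u four_ne_zero,
    Real.cos_four_mul', Real.sin_four_mul]
  -- the constant `1` in `1 ∓ cos t` is `(sin² u + cos² u)²`
  linear_combination (-(1 + Real.sin u ^ 2 + Real.cos u ^ 2) * (v 0 ^ 2 + v 1 ^ 2) ^ 2)
    * Real.sin_sq_add_cos_sq u

theorem range_circlePoint : Set.range circlePoint = circleS := by
  ext x
  constructor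
  · rintro ⟨t, rfl⟩
    exact Real.cos_sq_add_sin_sq t
  · intro (hx : x 0 ^ 2 + x 1 ^ 2 = 1)
    set z : ℂ := ⟨x 0, x 1⟩
    have hz : ‖z‖ = 1 := by
      rw [Complex.norm_def, Complex.normSq_mk, ← sq, ← sq, hx, Real.sqrt_one]
    have hz0 : z ≠ 0 := norm_ne_zero_iff.1 (hz.trans_ne one_ne_zero)
    refine ⟨z.arg, funext <| Fin.forall_fin_two.2 ⟨?_, ?_⟩⟩
    · simp [circlePoint, Complex.cos_arg hz0, hz, z]
    · simp [circlePoint, Complex.sin_arg, hz, z]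

theorem circlePoint_periodic : Function.Periodic circlePoint (2 * Real.pi) := fun t => by
  simp [circlePoint]

theorem rootCurve₁_sub_two_pi (t : ℝ) : rootCurve₁ (t - 2 * Real.pi) = rootCurve₂ t := by
  have h : (t - 2 * Real.pi) / 4 = t / 4 - Real.pi / 2 := by ring
  simp only [rootCurve₁, rootCurve₂, h, Real.sin_sub_pi_div_two, Real.cos_sub_pi_div_two]

theorem rootCurve₁_ne_rootCurve₂ (t : ℝ) : rootCurve₁ t ≠ rootCurve₂ t := by
  rw [rootCurve₁, rootCurve₂, Ne, Projectivization.mk_eq_mk_iff_mul_eq_mul]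
  simp only [Matrix.cons_val_zero, Matrix.cons_val_one]
  nlinarith [Real.sin_sq_add_cos_sq (t / 4)]

theorem continuous_circlePoint : Continuous circlePoint := by
  unfold circlePoint
  fun_prop

theorem continuous_rootCurve₁ : Continuous rootCurve₁ :=
  continuous_mk_RP1 (by fun_prop) _

theorem continuous_rootCurve₂ : Continuous rootCurve₂ :=
  continuous_mk_RP1 (by fun_prop) _

theorem eq_of_forall_eq_or_eq {α β : Type*} [TopologicalSpace α] [PreconnectedSpace α]
    [TopologicalSpace β] [T2Space β] {f g h : α → β} (hf : Continuous f) (hg : Continuous g)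
    (hh : Continuous h) (hfgh : ∀ a, f a = g a ∨ f a = h a) (hgh : ∀ a, g a ≠ h a) {a₀ : α}
    (ha₀ : f a₀ = g a₀) : f = g := by
  have hcompl : {a | f a = g a} = {a | f a = h a}ᶜ := by
    ext a
    simp only [Set.mem_ofPred_eq, Set.mem_compl_iff]
    exact ⟨fun hg' hh' => hgh a (hg'.symm.trans hh'), (hfgh a).resolve_right⟩
  have hclopen : IsClopen {a | f a = g a} :=
    ⟨isClosed_eq hf hg, hcompl ▸ (isClosed_eq hf hh).isOpen_compl⟩
  exact funext (Set.eq_univ_iff_forall.1 (hclopen.eq_univ ⟨a₀, ha₀⟩))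

theorem eval_homog_evalP_Pex_eq_zero_iff (t : ℝ) {v : Fin 2 → ℝ} (hv : v ≠ 0) :
    eval v (homog 4 (evalP Pex (circlePoint t))) = 0 ↔
      Projectivization.mk ℝ v hv = rootCurve₁ t ∨ Projectivization.mk ℝ v hv = rootCurve₂ t := by
  simp only [homog_evalP_Pex_circlePoint, map_mul, map_pow, eval_C, mul_eq_zero,
    OfNat.ofNat_ne_zero, false_or, pow_eq_zero_iff two_ne_zero]
  rw [eval_linForm_eq_zero_iff hv (sincos_ne _), eval_linForm_eq_zero_iff hv (negcossin_ne _)]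
  rfl

theorem hasProjRootOfMult_rootCurve (t : ℝ) :
    HasProjRootOfMult (homog 4 (evalP Pex (circlePoint t)))
        ![Real.sin (t / 4), Real.cos (t / 4)] 2 ∧
      HasProjRootOfMult (homog 4 (evalP Pex (circlePoint t)))
        ![-Real.cos (t / 4), Real.sin (t / 4)] 2 := by
  rw [homog_evalP_Pex_circlePoint]
  refine ⟨hasProjRootOfMult_C_mul_linForm_pow_mul_linForm_pow _ _ (rootCurve₁_ne_rootCurve₂ t)
    (by norm_num) 2 2, ?_⟩
  rw [mul_right_comm]
  exact hasProjRootOfMult_C_mul_linForm_pow_mul_linForm_pow _ _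
    (rootCurve₁_ne_rootCurve₂ t).symm (by norm_num) 2 2

theorem zProj_Pex_circleS :
    ZProj 4 Pex circleS = Set.range fun t => (circlePoint t, rootCurve₁ t) := by
  ext ⟨x, p⟩
  constructor
  · rintro ⟨hx, v, hv, rfl, hroot⟩
    obtain ⟨t, rfl⟩ := range_circlePoint.symm ▸ hx
    rcases (eval_homog_evalP_Pex_eq_zero_iff t hv).1 hroot with h | h
    · exact ⟨t, by rw [h]⟩
    · exact ⟨t - 2 * Real.pi,
        Prod.ext (circlePoint_periodic.sub_eq t) ((rootCurve₁_sub_two_pi t).trans h.symm)⟩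
  · rintro ⟨t, ht⟩
    cases ht
    refine ⟨range_circlePoint ▸ Set.mem_range_self t, _, sincos_ne (t / 4), rfl, ?_⟩
    exact (eval_homog_evalP_Pex_eq_zero_iff t _).2 (Or.inl rfl)

theorem not_projDelineable_Pex_circleS : ¬ ProjDelineable 4 Pex circleS := by
  rintro ⟨k, θ, hcont, -, hroot, -⟩
  have hmem : ∀ t, circlePoint t ∈ circleS := fun t => range_circlePoint ▸ Set.mem_range_self t
  have hroots :
      ∀ l t, θ l (circlePoint t) = rootCurve₁ t ∨ θ l (circlePoint t) = rootCurve₂ t := by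
    intro l t
    have hrep := (θ l (circlePoint t)).mk_rep
    rw [← hrep, ← eval_homog_evalP_Pex_eq_zero_iff]
    exact (hroot _ (hmem t) _ _).2 ⟨l, hrep.symm⟩
  obtain ⟨l, hl⟩ := (hroot _ (hmem 0) _ (sincos_ne (0 / 4))).1
    ((eval_homog_evalP_Pex_eq_zero_iff 0 _).2 (Or.inl rfl))
  have hθ : (fun t => θ l (circlePoint t)) = rootCurve₁ :=
    eq_of_forall_eq_or_eq ((hcont l).comp_continuous continuous_circlePoint hmem)
      continuous_rootCurve₁ continuous_rootCurve₂ (hroots l) rootCurve₁_ne_rootCurve₂ hl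
  have hperiod : circlePoint (2 * Real.pi) = circlePoint 0 := by
    simpa using circlePoint_periodic 0
  apply rootCurve₁_ne_rootCurve₂ (2 * Real.pi)
  calc rootCurve₁ (2 * Real.pi)
      = θ l (circlePoint (2 * Real.pi)) := (congrFun hθ _).symm
    _ = θ l (circlePoint 0) := by rw [hperiod]
    _ = rootCurve₁ (2 * Real.pi - 2 * Real.pi) := by rw [sub_self]; exact congrFun hθ 0
    _ = rootCurve₂ (2 * Real.pi) := rootCurve₁_sub_two_pi _

/-- For the unit circle `S` and the polynomial `Pex`, for every `t ∈ ℝ`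
the projective roots of `Pex` above `(cos t, sin t)` are exactly the two (distinct) points
`(sin(t/4) : cos(t/4))` and `(−cos(t/4) : sin(t/4))`, each of multiplicity two with respect
to degree `4`; consequently `Z_{ℝP¹}(Pex,S)` is connected, being the image of `ℝ` under
`t ↦ ((cos t, sin t), (sin(t/4):cos(t/4)))`, and `Pex` is not projectively delineable
over `S`. -/
theorem circle_counterexample :
    (∀ t : ℝ, ∀ (v : Fin 2 → ℝ) (hv : v ≠ 0),
      (MvPolynomial.eval v (homog 4 (evalP Pex ![Real.cos t, Real.sin t])) = 0 ↔
        Projectivization.mk ℝ v hv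
            = Projectivization.mk ℝ ![Real.sin (t/4), Real.cos (t/4)] (sincos_ne (t/4)) ∨
        Projectivization.mk ℝ v hv
            = Projectivization.mk ℝ ![-Real.cos (t/4), Real.sin (t/4)] (negcossin_ne (t/4)))) ∧
    (∀ t : ℝ,
      Projectivization.mk ℝ ![Real.sin (t/4), Real.cos (t/4)] (sincos_ne (t/4))
        ≠ Projectivization.mk ℝ ![-Real.cos (t/4), Real.sin (t/4)] (negcossin_ne (t/4))) ∧
    (∀ t : ℝ,
      HasProjRootOfMult (homog 4 (evalP Pex ![Real.cos t, Real.sin t]))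
        ![Real.sin (t/4), Real.cos (t/4)] 2 ∧
      HasProjRootOfMult (homog 4 (evalP Pex ![Real.cos t, Real.sin t]))
        ![-Real.cos (t/4), Real.sin (t/4)] 2) ∧
    ZProj 4 Pex circleS = Set.range (fun t : ℝ =>
      ((![Real.cos t, Real.sin t] : Fin 2 → ℝ),
        Projectivization.mk ℝ ![Real.sin (t/4), Real.cos (t/4)] (sincos_ne (t/4)))) ∧
    IsConnected (ZProj 4 Pex circleS) ∧
    ¬ ProjDelineable 4 Pex circleS := by
  refine ⟨fun t _ hv => eval_homog_evalP_Pex_eq_zero_iff t hv, rootCurve₁_ne_rootCurve₂,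
    hasProjRootOfMult_rootCurve, zProj_Pex_circleS, ?_, not_projDelineable_Pex_circleS⟩
  rw [zProj_Pex_circleS]
  exact isConnected_range (continuous_circlePoint.prodMk continuous_rootCurve₁)
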